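/- arXiv:1907.00569 — 3 statements merged into one kernel-verified Lean document; each statement's English description precedes it below -/
import Mathlib

section
/- Let G be an abelian group, B ⊆ G, and ~ the congruence on B⁺ given by equality of length and equality of alternating sum. Then the quotient semigroup AS(G,B) = B⁺/~ is cancellative: if xz = yz then x = y, and if xy = xz then y = z, for all x, y, z in AS(G,B). -/
/-- Alternating sum of a word: alt(b₁b₂…b_k) = b₁ - b₂ + b₃ - … -/
def altSum {G : Type*} [AddCommGroup G] : List G → G
  | [] => 0
  | a :: w => a - altSum w

lemma altSum_append {G : Type*} [AddCommGroup G] (x z : List G) :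
    altSum (x ++ z) = altSum x + ((-1 : ℤ) ^ x.length) • altSum z := by
  induction x with
  | nil => simp [altSum]
  | cons a w ih =>
      show a - altSum (w ++ z) = _
      rw [ih, List.length_cons, pow_succ, mul_neg_one, neg_smul]
      show _ = (a - altSum w) + _
      abel

/-- The alternating sum semigroup AS(G,B) = B⁺/~ is cancellative: stated on
representatives, if x·z ~ y·z then x ~ y, and if z·x ~ z·y then x ~ y. -/
theorem stmt_1 {G : Type*} [AddCommGroup G] (B : Set G)
    (x y z : List G) (hx : x ≠ []) (hy : y ≠ []) (hz : z ≠ [])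
    (hxB : ∀ a ∈ x, a ∈ B) (hyB : ∀ a ∈ y, a ∈ B) (hzB : ∀ a ∈ z, a ∈ B) :
    (((x ++ z).length = (y ++ z).length ∧ altSum (x ++ z) = altSum (y ++ z)) →
      x.length = y.length ∧ altSum x = altSum y) ∧
    (((z ++ x).length = (z ++ y).length ∧ altSum (z ++ x) = altSum (z ++ y)) →
      x.length = y.length ∧ altSum x = altSum y) := by
  constructor
  · rintro ⟨hl, hs⟩
    simp only [List.length_append, Nat.add_right_cancel_iff] at hl
    refine ⟨hl, ?_⟩
    rw [altSum_append, altSum_append, hl] at hs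
    exact add_right_cancel hs
  · rintro ⟨hl, hs⟩
    simp only [List.length_append, Nat.add_right_cancel_iff, Nat.add_left_cancel_iff] at hl
    refine ⟨hl, ?_⟩
    rw [altSum_append, altSum_append] at hs
    have := add_left_cancel hs
    have h2 := congrArg (fun g : G => ((-1 : ℤ) ^ z.length) • g) this
    simpa [smul_smul, ← mul_pow] using h2
end

section
/- Let n, l ≥ 1 and set B = {0, 1, …, n} ∪ {jn+1 : 0 ≤ j ≤ l-1} ⊆ ℤ/(ln+1). Then the number of ~-classes of words over B of length 1 is m + l where m = n (i.e. |B| = n + l), and for every length d ≥ 2 the number of ~-classes is exactly ln + 1; that is, every element of ℤ/(ln+1) arises as the alternating sum of a word of length d ≥ 2 over B. -/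
lemma altSum_replicate_zero {G : Type*} [AddCommGroup G] (k : ℕ) :
    altSum (List.replicate k (0 : G)) = 0 := by
  induction k with
  | zero => rfl
  | succ k ih => simp [List.replicate_succ, altSum, ih]

lemma cast_nat_inj (N a b : ℕ) [NeZero N] (ha : a < N) (hb : b < N)
    (h : (a : ZMod N) = (b : ZMod N)) : a = b := by
  have := congrArg ZMod.val h
  rwa [ZMod.val_cast_of_lt ha, ZMod.val_cast_of_lt hb] at this

lemma exists_pair (n l : ℕ) (hn : 1 ≤ n) (hl : 1 ≤ l) (s : ZMod (l * n + 1)) :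
    ∃ a : ZMod (l * n + 1), ∃ b : ℕ, b ≤ n ∧ a - (b : ZMod (l * n + 1)) = s ∧
      ((∃ c : ℕ, c ≤ n ∧ a = (c : ZMod (l * n + 1))) ∨
        (∃ j : ℕ, j ≤ l - 1 ∧ a = ((j * n + 1 : ℕ) : ZMod (l * n + 1)))) := by
  have hsval : ((s.val : ℕ) : ZMod (l * n + 1)) = s := by
    simp [ZMod.natCast_val, ZMod.cast_id]
  have hklt : s.val < l * n + 1 := ZMod.val_lt s
  by_cases hk0 : s.val = 0
  · refine ⟨0, 0, Nat.zero_le n, by rw [← hsval, hk0]; simp, Or.inl ⟨0, Nat.zero_le n, by simp⟩⟩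
  · obtain ⟨q, r, hq, hr⟩ : ∃ q r : ℕ, q = (s.val - 1) / n ∧ r = (s.val - 1) % n :=
      ⟨_, _, rfl, rfl⟩
    have hrn : r < n := hr ▸ Nat.mod_lt _ hn
    have hq' : n * q + r = s.val - 1 := by rw [hq, hr]; exact Nat.div_add_mod _ n
    have hql : q < l := by
      rw [hq]
      apply Nat.div_lt_of_lt_mul
      have : l * n = n * l := Nat.mul_comm l n
      omega
    have hexp : (q + 1) * n = n * q + n := by ring
    have hsub : (q + 1) * n + 1 - (n - r) = s.val := by omega
    refine ⟨(((q + 1) * n + 1 : ℕ) : ZMod (l * n + 1)), n - r, by omega, ?_, ?_⟩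
    · rw [← Nat.cast_sub (by omega), hsub, hsval]
    · by_cases hq1 : q + 1 ≤ l - 1
      · exact Or.inr ⟨q + 1, hq1, rfl⟩
      · have hql2 : q + 1 = l := by omega
        refine Or.inl ⟨0, Nat.zero_le n, ?_⟩
        rw [hql2]
        simp

lemma card_B (n l : ℕ) (hn : 1 ≤ n) (hl : 1 ≤ l) :
    ({x | ∃ c : ℕ, c ≤ n ∧ x = (c : ZMod (l * n + 1))} ∪
      {x | ∃ j : ℕ, j ≤ l - 1 ∧ x = ((j * n + 1 : ℕ) : ZMod (l * n + 1))}).ncard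
      = n + l := by
  classical
  have hnl : n ≤ l * n := Nat.le_mul_of_pos_left n hl
  have hle1 : ∀ c : ℕ, c < n + 1 → c < l * n + 1 := by intro c hc; omega
  have hle2 : ∀ j : ℕ, j < l → j * n + 1 < l * n + 1 := by
    intro j hj
    have : j * n < l * n := (Nat.mul_lt_mul_right (by omega)).mpr hj
    omega
  set T1 : Finset (ZMod (l * n + 1)) :=
    (Finset.range (n + 1)).image (Nat.cast : ℕ → ZMod (l * n + 1)) with hT1
  set T2 : Finset (ZMod (l * n + 1)) :=
    (Finset.range l).image (fun j : ℕ => ((j * n + 1 : ℕ) : ZMod (l * n + 1))) with hT2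
  have hm1 : ∀ x, x ∈ T1 ↔ ∃ c : ℕ, c ≤ n ∧ x = (c : ZMod (l * n + 1)) := by
    intro x
    rw [hT1, Finset.mem_image]
    constructor
    · rintro ⟨c, hc, rfl⟩; exact ⟨c, by simpa using Nat.lt_succ_iff.mp (Finset.mem_range.mp hc), rfl⟩
    · rintro ⟨c, hc, rfl⟩; exact ⟨c, Finset.mem_range.mpr (by omega), rfl⟩
  have hm2 : ∀ x, x ∈ T2 ↔ ∃ j : ℕ, j ≤ l - 1 ∧ x = ((j * n + 1 : ℕ) : ZMod (l * n + 1)) := by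
    intro x
    rw [hT2, Finset.mem_image]
    constructor
    · rintro ⟨j, hj, rfl⟩; exact ⟨j, by have := Finset.mem_range.mp hj; omega, rfl⟩
    · rintro ⟨j, hj, rfl⟩; exact ⟨j, Finset.mem_range.mpr (by omega), rfl⟩
  have hBT : ({x | ∃ c : ℕ, c ≤ n ∧ x = (c : ZMod (l * n + 1))} ∪
      {x | ∃ j : ℕ, j ≤ l - 1 ∧ x = ((j * n + 1 : ℕ) : ZMod (l * n + 1))})
      = ↑(T1 ∪ T2) := by
    ext x
    rw [Finset.coe_union, Set.mem_union, Set.mem_union, Finset.mem_coe, Finset.mem_coe,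
      hm1, hm2]
    rfl
  rw [hBT, Set.ncard_coe_finset]
  have hc1 : T1.card = n + 1 := by
    rw [hT1, Finset.card_image_of_injOn, Finset.card_range]
    intro a ha b hb hab
    simp only [Finset.coe_range, Set.mem_Iio] at ha hb
    exact cast_nat_inj _ _ _ (hle1 a ha) (hle1 b hb) hab
  have hc2 : T2.card = l := by
    rw [hT2, Finset.card_image_of_injOn, Finset.card_range]
    intro a ha b hb hab
    simp only [Finset.coe_range, Set.mem_Iio] at ha hb
    have h1 := cast_nat_inj _ _ _ (hle2 a ha) (hle2 b hb) hab
    have h2 : a * n = b * n := by omega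
    exact Nat.eq_of_mul_eq_mul_right (by omega) h2
  have hinter : T1 ∩ T2 = {(1 : ZMod (l * n + 1))} := by
    ext x
    rw [Finset.mem_inter, hm1, hm2, Finset.mem_singleton]
    constructor
    · rintro ⟨⟨c, hc, rfl⟩, ⟨j, hj, hjc⟩⟩
      have hcj := cast_nat_inj _ _ _ (hle1 c (by omega)) (hle2 j (by omega)) hjc
      have hj0 : j = 0 := by
        by_contra hj0
        have : 1 * n ≤ j * n := Nat.mul_le_mul_right n (by omega)
        omega
      subst hj0
      simp only [Nat.zero_mul, Nat.zero_add] at hcj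
      rw [hcj]; norm_num
    · rintro rfl
      exact ⟨⟨1, by omega, by norm_num⟩, ⟨0, by omega, by norm_num⟩⟩
  have hcu := Finset.card_union_add_card_inter T1 T2
  rw [hinter, hc1, hc2, Finset.card_singleton] at hcu
  omega

/-- For B = {0,1,…,n} ∪ {jn+1 : 0 ≤ j ≤ l-1} ⊆ ℤ/(ln+1): the number of
~-classes of words of length 1 is n + l (i.e. |B| = n + l), and for every
d ≥ 2 every element of ℤ/(ln+1) is the alternating sum of a length-d word
over B, so the number of ~-classes of length-d words is exactly ln + 1. -/
theorem stmt_6 (n l : ℕ) (hn : 1 ≤ n) (hl : 1 ≤ l)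
    (B : Set (ZMod (l * n + 1)))
    (hB : B = {x | ∃ c : ℕ, c ≤ n ∧ x = (c : ZMod (l * n + 1))} ∪
      {x | ∃ j : ℕ, j ≤ l - 1 ∧ x = ((j * n + 1 : ℕ) : ZMod (l * n + 1))}) :
    B.ncard = n + l ∧
    (∀ d : ℕ, 2 ≤ d →
      (∀ s : ZMod (l * n + 1), ∃ w : List (ZMod (l * n + 1)),
        (∀ x ∈ w, x ∈ B) ∧ w.length = d ∧ altSum w = s) ∧
      Nat.card (Quot fun u v : {w : List (ZMod (l * n + 1)) //
          (∀ x ∈ w, x ∈ B) ∧ w.length = d} =>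
        altSum u.1 = altSum v.1) = l * n + 1) := by
  have hzero : (0 : ZMod (l * n + 1)) ∈ B := by
    rw [hB]; exact Or.inl ⟨0, Nat.zero_le n, by simp⟩
  refine ⟨hB ▸ card_B n l hn hl, ?_⟩
  intro d hd
  have hexist : ∀ s : ZMod (l * n + 1), ∃ w : List (ZMod (l * n + 1)),
      (∀ x ∈ w, x ∈ B) ∧ w.length = d ∧ altSum w = s := by
    intro s
    obtain ⟨a, b, hb, hab, ha⟩ := exists_pair n l hn hl s
    refine ⟨a :: (b : ZMod (l * n + 1)) :: List.replicate (d - 2) 0, ?_, ?_, ?_⟩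
    · intro x hx
      rcases hx with _ | ⟨_, hx⟩
      · rw [hB]
        rcases ha with h | h
        · exact Or.inl h
        · exact Or.inr h
      · rcases hx with _ | ⟨_, hx⟩
        · rw [hB]; exact Or.inl ⟨b, hb, rfl⟩
        · have := List.eq_of_mem_replicate hx
          rw [this]; exact hzero
    · simp; omega
    · show a - ((b : ZMod (l * n + 1)) - altSum (List.replicate (d - 2) (0 : ZMod (l * n + 1)))) = s
      rw [altSum_replicate_zero, sub_zero, hab]
  refine ⟨hexist, ?_⟩
  have hbij : Function.Bijective
      (Quot.lift (fun u : {w : List (ZMod (l * n + 1)) //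
          (∀ x ∈ w, x ∈ B) ∧ w.length = d} => altSum u.1)
        (fun u v h => h) :
        Quot (fun u v : {w : List (ZMod (l * n + 1)) //
          (∀ x ∈ w, x ∈ B) ∧ w.length = d} => altSum u.1 = altSum v.1) → ZMod (l * n + 1)) := by
    constructor
    · intro x y
      induction x using Quot.ind with | _ u =>
      induction y using Quot.ind with | _ v =>
      intro h
      exact Quot.sound h
    · intro s
      obtain ⟨w, hw1, hw2, hw3⟩ := hexist s
      exact ⟨Quot.mk _ ⟨w, hw1, hw2⟩, hw3⟩
  rw [Nat.card_eq_of_bijective _ hbij, Nat.card_zmod]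
end

section
/- In any cancellative semigroup containing elements a_{i} indexed so that a_{i-1}a_i = a_i a_{i+1} and a_i a_{i-1} = a_{i+1} a_i hold for 1 ≤ i ≤ n, if additionally a₀a₀ = a₁a₁, then a₀a_j = a₁a_{j+1} for all j = 0, 1, …, n. -/
/-- In a cancellative semigroup with elements aᵢ satisfying
a_{i-1}aᵢ = aᵢa_{i+1} and aᵢa_{i-1} = a_{i+1}aᵢ for 1 ≤ i ≤ n, if moreover
a₀a₀ = a₁a₁ then a₀aⱼ = a₁a_{j+1} for all j = 0, 1, …, n. -/
theorem stmt_8 {S : Type*} [Semigroup S]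
    (hcl : ∀ x y z : S, x * z = y * z → x = y)
    (hcr : ∀ x y z : S, x * y = x * z → y = z)
    (n : ℕ) (a : ℕ → S)
    (h1 : ∀ i : ℕ, 1 ≤ i → i ≤ n → a (i - 1) * a i = a i * a (i + 1))
    (h2 : ∀ i : ℕ, 1 ≤ i → i ≤ n → a i * a (i - 1) = a (i + 1) * a i)
    (h0 : a 0 * a 0 = a 1 * a 1) :
    ∀ j : ℕ, j ≤ n → a 0 * a j = a 1 * a (j + 1) := by
  have C : ∀ j : ℕ, j ≤ n → a j * a j = a (j + 1) * a (j + 1) := by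
    intro j
    induction j with
    | zero => intro _; exact h0
    | succ k ih =>
      intro hk
      have hk' : k ≤ n := Nat.le_of_succ_le hk
      have hck := ih hk'
      have e1 := h1 (k + 1) (Nat.succ_le_succ (Nat.zero_le k)) hk
      simp only [Nat.add_sub_cancel] at e1
      apply hcr (a (k + 1))
      calc a (k + 1) * (a (k + 1) * a (k + 1))
          = (a (k + 1) * a (k + 1)) * a (k + 1) := by rw [mul_assoc]
        _ = (a k * a k) * a (k + 1) := by rw [hck]
        _ = a k * (a k * a (k + 1)) := by rw [mul_assoc]
        _ = a k * (a (k + 1) * a (k + 1 + 1)) := by rw [e1]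
        _ = (a k * a (k + 1)) * a (k + 1 + 1) := by rw [mul_assoc]
        _ = (a (k + 1) * a (k + 1 + 1)) * a (k + 1 + 1) := by rw [e1]
        _ = a (k + 1) * (a (k + 1 + 1) * a (k + 1 + 1)) := by rw [mul_assoc]
  intro j
  induction j with
  | zero => intro _; exact h0
  | succ k ih =>
    intro hk
    have hk' : k ≤ n := Nat.le_of_succ_le hk
    have hA := ih hk'
    have e1 := h1 (k + 1) (Nat.succ_le_succ (Nat.zero_le k)) hk
    simp only [Nat.add_sub_cancel] at e1
    apply hcl _ _ (a (k + 1 + 1))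
    calc (a 0 * a (k + 1)) * a (k + 1 + 1)
        = a 0 * (a (k + 1) * a (k + 1 + 1)) := mul_assoc _ _ _
      _ = a 0 * (a k * a (k + 1)) := by rw [e1]
      _ = (a 0 * a k) * a (k + 1) := (mul_assoc _ _ _).symm
      _ = (a 1 * a (k + 1)) * a (k + 1) := by rw [hA]
      _ = a 1 * (a (k + 1) * a (k + 1)) := mul_assoc _ _ _
      _ = a 1 * (a (k + 1 + 1) * a (k + 1 + 1)) := by rw [C (k + 1) hk]
      _ = (a 1 * a (k + 1 + 1)) * a (k + 1 + 1) := (mul_assoc _ _ _).symm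
end
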